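/- Let ℓ be a prime, r ≥ 1, d ≥ 1 with gcd(d, ℓ) = 1, N = d·ℓʳ − 1, and let M = ℤ_ℓ^m be a finite free ℤ_ℓ-module. Let Φ : M^N → M^N be given by Φ(α)_t = α_{t−1} − 2α_t + α_{t+1} (with α₀ = α_{N+1} = 0). Then coker(Φ) ≅ (ℤ/ℓʳ)^m. -/

import Mathlib

/-!
Summation by parts shows that the weighted sum `w(α) = ∑ₜ (t + 1) • αₜ` of a second difference
with zero boundary values is a multiple of `N + 1`. Conversely, if `w(α) = (N + 1) • c`, solve
the recursion `a₀ = a₁ = 0`, `Δ²a = α` and correct it by a linear sequence `j • B`; the choice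
of `B` that kills `a (N + 1)` exists precisely because `w(α) ∈ (N + 1) • M`. Hence `w` identifies
the cokernel of `Φ` with `M ⧸ (N + 1) • M`, and since `N + 1 = d ℓʳ` with `d` a unit in `ℤ_ℓ`,
this is `(ℤ_ℓ ⧸ ℓʳ)ᵐ = (ℤ/ℓʳ)ᵐ`.
-/

open Finset

section SecondDifference

variable {M : Type*} [AddCommGroup M]

def secondDiff (a : ℕ → M) (j : ℕ) : M := a j - 2 • a (j + 1) + a (j + 2)

theorem sum_range_succ_nsmul_secondDiff (a : ℕ → M) (h0 : a 0 = 0) (N : ℕ) :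
    ∑ t ∈ range N, (t + 1) • secondDiff a t = N • a (N + 1) - (N + 1) • a N := by
  induction N with
  | zero => simp [h0]
  | succ N ih =>
    rw [sum_range_succ, ih, secondDiff]
    module

def secondDiffSolution (f : ℕ → M) : ℕ → M
  | 0 => 0
  | 1 => 0
  | j + 2 => f j + 2 • secondDiffSolution f (j + 1) - secondDiffSolution f j

theorem secondDiff_secondDiffSolution (f : ℕ → M) (j : ℕ) :
    secondDiff (secondDiffSolution f) j = f j := by
  rw [secondDiff, secondDiffSolution]
  abel

theorem secondDiff_add_nsmul (a : ℕ → M) (B : M) (j : ℕ) :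
    secondDiff (fun i => a i + i • B) j = secondDiff a j := by
  simp only [secondDiff]
  module

theorem exists_boundary_secondDiff_eq_iff (f : ℕ → M) (N : ℕ) :
    (∃ a : ℕ → M, a 0 = 0 ∧ a (N + 1) = 0 ∧ ∀ j < N, secondDiff a j = f j) ↔
      ∃ c, ∑ t ∈ range N, (t + 1) • f t = (N + 1) • c := by
  constructor
  · rintro ⟨a, h0, hN, ha⟩
    refine ⟨-a N, ?_⟩
    rw [← sum_congr rfl fun t ht => congrArg _ (ha t (mem_range.mp ht)),
      sum_range_succ_nsmul_secondDiff a h0, hN]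
    module
  · rintro ⟨c, hc⟩
    set a₀ := secondDiffSolution f
    have hsum := sum_range_succ_nsmul_secondDiff a₀ rfl N
    simp only [a₀, secondDiff_secondDiffSolution, hc] at hsum
    refine ⟨fun i => a₀ i + i • (a₀ N + c - a₀ (N + 1)), by simp [a₀, secondDiffSolution], ?_,
      fun j _ => by rw [secondDiff_add_nsmul, secondDiff_secondDiffSolution]⟩
    linear_combination (norm := module) hsum

end SecondDifference

section DirichletLaplacian

variable {M : Type*} [AddCommGroup M] {N : ℕ}

def extendByZero (α : Fin N → M) (j : ℕ) : M :=
  if h : 1 ≤ j ∧ j ≤ N then α ⟨j - 1, by omega⟩ else 0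

@[simp]
theorem extendByZero_zero (α : Fin N → M) : extendByZero α 0 = 0 := by
  simp [extendByZero]

@[simp]
theorem extendByZero_last (α : Fin N → M) : extendByZero α (N + 1) = 0 := by
  simp [extendByZero]

@[simp]
theorem extendByZero_succ (α : Fin N → M) (t : Fin N) : extendByZero α (t + 1) = α t := by
  simp [extendByZero]

theorem extendByZero_comp_succ (a : ℕ → M) (h0 : a 0 = 0) (hN : a (N + 1) = 0) {j : ℕ}
    (hj : j ≤ N + 1) : extendByZero (fun t : Fin N => a (t + 1)) j = a j := by
  unfold extendByZero
  split_ifs with h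
  · simp only [Nat.sub_add_cancel h.1]
  · obtain rfl | rfl : j = 0 ∨ j = N + 1 := by omega
    exacts [h0.symm, hN.symm]

def laplacian (α : Fin N → M) (t : Fin N) : M := secondDiff (extendByZero α) t

theorem laplacian_comp_succ (a : ℕ → M) (h0 : a 0 = 0) (hN : a (N + 1) = 0) (t : Fin N) :
    laplacian (fun s : Fin N => a (s + 1)) t = secondDiff a t := by
  simp only [laplacian, secondDiff, extendByZero_comp_succ a h0 hN (by omega : t.1 ≤ N + 1),
    extendByZero_comp_succ a h0 hN (by omega : t.1 + 1 ≤ N + 1),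
    extendByZero_comp_succ a h0 hN (by omega : t.1 + 2 ≤ N + 1)]

def weightedSum : (Fin N → M) →+ M where
  toFun α := ∑ t, (t.1 + 1) • α t
  map_zero' := by simp
  map_add' α β := by simp [sum_add_distrib]

theorem weightedSum_eq_sum_range (α : Fin N → M) :
    weightedSum α = ∑ t ∈ range N, (t + 1) • extendByZero α (t + 1) := by
  rw [← Fin.sum_univ_eq_sum_range (fun t => (t + 1) • extendByZero α (t + 1))]
  simp [weightedSum]

theorem weightedSum_single_zero (hN : 0 < N) (x : M) :
    weightedSum (Pi.single (⟨0, hN⟩ : Fin N) x) = x := by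
  rw [weightedSum, AddMonoidHom.coe_mk, ZeroHom.coe_mk, Fintype.sum_eq_single ⟨0, hN⟩]
  · simp
  · intro t ht
    simp [ht]

theorem mem_range_laplacian_iff (α : Fin N → M) :
    α ∈ Set.range laplacian ↔ ∃ c, weightedSum α = (N + 1) • c := by
  rw [weightedSum_eq_sum_range, ← exists_boundary_secondDiff_eq_iff]
  constructor
  · rintro ⟨β, rfl⟩
    exact ⟨extendByZero β, by simp, by simp,
      fun j hj => (extendByZero_succ (laplacian β) ⟨j, hj⟩).symm⟩
  · rintro ⟨a, h0, hN, ha⟩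
    exact ⟨fun t => a (t + 1), funext fun t =>
      (laplacian_comp_succ a h0 hN t).trans ((ha t t.2).trans (extendByZero_succ α t))⟩

theorem nonempty_quotient_range_addEquiv {R : Type*} [Ring R] [Module R M]
    (Φ : (Fin N → M) →ₗ[R] (Fin N → M)) (hΦ : ∀ α, Φ α = laplacian α)
    {Q : Type*} [AddCommGroup Q] (q : M →+ Q) (hq : Function.Surjective q)
    (hker : ∀ x, q x = 0 ↔ ∃ c, x = (N + 1) • c) :
    Nonempty (((Fin N → M) ⧸ LinearMap.range Φ) ≃+ Q) := by
  let π := q.comp (weightedSum (N := N))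
  have hπ_ker : π.ker = (LinearMap.range Φ).toAddSubgroup := by
    ext α
    rw [AddMonoidHom.mem_ker, AddMonoidHom.comp_apply, hker, ← mem_range_laplacian_iff,
      ← funext hΦ]
    rfl
  have hπ_surj : Function.Surjective π := by
    intro y
    obtain ⟨x, rfl⟩ := hq y
    rcases N.eq_zero_or_pos with rfl | hN
    · exact ⟨0, (map_zero π).trans ((hker x).2 ⟨x, by simp⟩).symm⟩
    · exact ⟨Pi.single ⟨0, hN⟩ x, congrArg q (weightedSum_single_zero hN x)⟩
  exact ⟨(QuotientAddGroup.quotientAddEquivOfEq hπ_ker.symm).trans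
    (QuotientAddGroup.quotientKerEquivOfSurjective π hπ_surj)⟩

end DirichletLaplacian

theorem Pi.exists_eq_nsmul_iff_forall_dvd {ι R : Type*} [Semiring R] (n : ℕ) (x : ι → R) :
    (∃ c, x = n • c) ↔ ∀ i, (n : R) ∣ x i := by
  constructor
  · rintro ⟨c, rfl⟩ i
    simp [nsmul_eq_mul]
  · intro h
    choose c hc using h
    exact ⟨c, funext fun i => by simp [hc i, nsmul_eq_mul]⟩

namespace PadicInt

variable {p : ℕ} [Fact p.Prime]

theorem toZModPow_eq_zero_iff (n : ℕ) (x : ℤ_[p]) :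
    toZModPow n x = 0 ↔ (p : ℤ_[p]) ^ n ∣ x := by
  rw [← RingHom.mem_ker, ker_toZModPow, Ideal.mem_span_singleton]

theorem isUnit_natCast_of_not_dvd {d : ℕ} (hd : ¬ p ∣ d) : IsUnit (d : ℤ_[p]) :=
  isUnit_iff.mpr (norm_natCast_eq_one_iff.mpr ((Nat.Prime.coprime_iff_not_dvd Fact.out).mpr hd))

theorem toZModPow_compLeft_eq_zero_iff {d : ℕ} (hd : ¬ p ∣ d) (n : ℕ) {ι : Type*}
    (x : ι → ℤ_[p]) :
    (toZModPow n).toAddMonoidHom.compLeft ι x = 0 ↔ ∃ c, x = (d * p ^ n) • c := by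
  rw [Pi.exists_eq_nsmul_iff_forall_dvd, funext_iff]
  push_cast
  simp [toZModPow_eq_zero_iff, (isUnit_natCast_of_not_dvd hd).mul_left_dvd]

end PadicInt

/-- For `N = d·ℓʳ − 1` with `gcd(d, ℓ) = 1` and `M = ℤ_ℓ^m`, the cokernel of the
tridiagonal map `Φ` on `M^N` is isomorphic to `(ℤ/ℓʳ)^m`. -/
theorem coker_discrete_laplacian (ℓ : ℕ) [Fact ℓ.Prime] (r d m : ℕ)
    (hcop : ¬ ℓ ∣ d) (N : ℕ) (hN : N = d * ℓ ^ r - 1)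
    (e : (Fin N → (Fin m → ℤ_[ℓ])) → ℕ → (Fin m → ℤ_[ℓ]))
    (he : ∀ α j, e α j = if h : 1 ≤ j ∧ j ≤ N then α ⟨j - 1, by omega⟩ else 0)
    (Φ : (Fin N → (Fin m → ℤ_[ℓ])) →ₗ[ℤ_[ℓ]] (Fin N → (Fin m → ℤ_[ℓ])))
    (hΦ : ∀ α t, Φ α t = e α t.1 - 2 • e α (t.1 + 1) + e α (t.1 + 2)) :
    Nonempty (((Fin N → (Fin m → ℤ_[ℓ])) ⧸ LinearMap.range Φ) ≃+
      (Fin m → ZMod (ℓ ^ r))) := by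
  have hd : d ≠ 0 := by
    rintro rfl
    exact hcop (dvd_zero ℓ)
  have hN1 : N + 1 = d * ℓ ^ r := by
    have : d * ℓ ^ r ≠ 0 := mul_ne_zero hd (pow_ne_zero r (Fact.out : ℓ.Prime).ne_zero)
    omega
  obtain rfl : e = extendByZero := funext fun α => funext (he α)
  refine nonempty_quotient_range_addEquiv Φ (fun α => funext (hΦ α))
    ((PadicInt.toZModPow r).toAddMonoidHom.compLeft (Fin m))
    (ZMod.ringHom_surjective (PadicInt.toZModPow r)).comp_left fun x => ?_
  rw [hN1]
  exact PadicInt.toZModPow_compLeft_eq_zero_iff hcop r x
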